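/- arXiv:2108.03570 — 3 statements merged into one kernel-verified Lean document; each statement's English description precedes it below -/
import Mathlib

section
/- Let g ~ N(0,1) and e ~ N(0,σ²) be independent Gaussian random variables, and let θ(g) = sign(g + e). Then E[θ(g)·g] = √(2/(π(1+σ²))). -/
open MeasureTheory ProbabilityTheory Real

noncomputable def sgn (x : ℝ) : ℝ := if 0 < x then 1 else -1

/-!
Conditionally on `e = y`, the expectation is `E[sgn (g + y) g] = 2 φ(y)` with `φ` the standard
normal density: split the line at `-y` and use `x φ(x) = -φ'(x)`. Hence the answer is
`2 E[φ(e)] = 2 ∫ φ_{σ²} φ_1`, twice the density of `N(0, 1 + σ²)` at `0`.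
-/

open Filter Topology Set
open scoped NNReal

lemma measurable_sgn : Measurable sgn :=
  Measurable.ite measurableSet_Ioi measurable_const measurable_const

lemma abs_sgn (x : ℝ) : |sgn x| = 1 := by
  unfold sgn; split <;> norm_num

lemma integrable_sgn_add_mul_fst {ν ν' : Measure ℝ} [IsFiniteMeasure ν']
    (hν : Integrable id ν) :
    Integrable (fun p : ℝ × ℝ => sgn (p.1 + p.2) * p.1) (ν.prod ν') :=
  (hν.comp_fst ν').mono
    ((measurable_sgn.comp (measurable_fst.add measurable_snd)).mul
      measurable_fst).aestronglyMeasurable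
    (ae_of_all _ fun p => by simp [abs_sgn])

namespace ProbabilityTheory

variable (μ : ℝ) (v : ℝ≥0)

lemma hasDerivAt_neg_mul_gaussianPDFReal (x : ℝ) :
    HasDerivAt (fun x => -(v * gaussianPDFReal μ v x)) ((x - μ) * gaussianPDFReal μ v x) x := by
  rcases eq_or_ne v 0 with rfl | hv
  · simp only [gaussianPDFReal_zero_var, Pi.zero_apply, mul_zero, neg_zero]
    exact hasDerivAt_const x 0
  have hv' : (v : ℝ) ≠ 0 := NNReal.coe_ne_zero.2 hv
  have hexp : HasDerivAt (fun y => -(y - μ) ^ 2 / (2 * v)) (-(x - μ) / v) x := by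
    refine ((((hasDerivAt_id' x).sub_const μ).fun_pow 2).fun_neg.div_const
      (2 * (v : ℝ))).congr_deriv ?_
    field_simp
    ring
  exact ((hexp.exp.const_mul (√(2 * π * v))⁻¹).const_mul (v : ℝ)).neg.congr_deriv (by
    simp only [gaussianPDFReal]
    field_simp)

lemma tendsto_gaussianPDFReal_cocompact : Tendsto (gaussianPDFReal μ v) (cocompact ℝ) (𝓝 0) := by
  rcases eq_or_ne v 0 with rfl | hv
  · rw [gaussianPDFReal_zero_var]
    exact tendsto_const_nhds
  have hsq : Tendsto (fun x => (x - μ) ^ 2) (cocompact ℝ) atTop := by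
    refine ((tendsto_pow_atTop two_ne_zero).comp (tendsto_dist_right_cocompact_atTop μ)).congr
      fun x => ?_
    simp [Real.dist_eq, sq_abs]
  have hexp : Tendsto (fun x => -(x - μ) ^ 2 / (2 * v)) (cocompact ℝ) atBot := by
    simp_rw [neg_div]
    exact tendsto_neg_atTop_atBot.comp (hsq.atTop_div_const (by positivity))
  have h := (tendsto_exp_atBot.comp hexp).const_mul (√(2 * π * v))⁻¹
  rwa [mul_zero] at h

lemma integrable_sub_mul_gaussianPDFReal :
    Integrable (fun x => (x - μ) * gaussianPDFReal μ v x) := by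
  rcases eq_or_ne v 0 with rfl | hv
  · simp
  have h : Integrable (fun x => x - μ) (gaussianReal μ v) :=
    (memLp_id_gaussianReal' 1 ENNReal.one_ne_top).integrable le_rfl |>.sub (integrable_const μ)
  rw [gaussianReal_of_var_ne_zero _ hv, integrable_withDensity_iff_integrable_smul'
    (measurable_gaussianPDF _ _) (ae_of_all _ fun _ => gaussianPDF_lt_top)] at h
  simpa [toReal_gaussianPDF, mul_comm] using h

lemma integral_Ioi_sub_mul_gaussianPDFReal (a : ℝ) :
    ∫ x in Ioi a, (x - μ) * gaussianPDFReal μ v x = v * gaussianPDFReal μ v a := by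
  have hlim : Tendsto (fun x => -(v * gaussianPDFReal μ v x)) atTop (𝓝 0) := by
    simpa using (((tendsto_gaussianPDFReal_cocompact μ v).mono_left
      atTop_le_cocompact).const_mul (v : ℝ)).neg
  rw [integral_Ioi_of_hasDerivAt_of_tendsto' (fun x _ => hasDerivAt_neg_mul_gaussianPDFReal μ v x)
    (integrable_sub_mul_gaussianPDFReal μ v).integrableOn hlim]
  ring

lemma integral_Iic_sub_mul_gaussianPDFReal (a : ℝ) :
    ∫ x in Iic a, (x - μ) * gaussianPDFReal μ v x = -(v * gaussianPDFReal μ v a) := by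
  have hlim : Tendsto (fun x => -(v * gaussianPDFReal μ v x)) atBot (𝓝 0) := by
    simpa using (((tendsto_gaussianPDFReal_cocompact μ v).mono_left
      atBot_le_cocompact).const_mul (v : ℝ)).neg
  rw [integral_Iic_of_hasDerivAt_of_tendsto' (fun x _ => hasDerivAt_neg_mul_gaussianPDFReal μ v x)
    (integrable_sub_mul_gaussianPDFReal μ v).integrableOn hlim]
  ring

lemma integral_sgn_sub_mul_sub_gaussianReal (c : ℝ) :
    ∫ x, sgn (x - c) * (x - μ) ∂gaussianReal μ v = 2 * v * gaussianPDFReal μ v c := by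
  rcases eq_or_ne v 0 with rfl | hv
  · simp [gaussianReal_zero_var]
  have hint : Integrable (fun x => sgn (x - c) * ((x - μ) * gaussianPDFReal μ v x)) :=
    (integrable_sub_mul_gaussianPDFReal μ v).bdd_mul
      (measurable_sgn.comp (measurable_sub_const c)).aestronglyMeasurable
      (ae_of_all _ fun x => (abs_sgn _).le)
  have hIic : ∫ x in Iic c, sgn (x - c) * ((x - μ) * gaussianPDFReal μ v x)
      = ∫ x in Iic c, -((x - μ) * gaussianPDFReal μ v x) :=
    setIntegral_congr_fun measurableSet_Iic fun x hx => by
      simp [sgn, not_lt.2 (sub_nonpos.2 (mem_Iic.1 hx))]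
  have hIoi : ∫ x in Ioi c, sgn (x - c) * ((x - μ) * gaussianPDFReal μ v x)
      = ∫ x in Ioi c, (x - μ) * gaussianPDFReal μ v x :=
    setIntegral_congr_fun measurableSet_Ioi fun x hx => by
      simp [sgn, sub_pos.2 (mem_Ioi.1 hx)]
  rw [integral_gaussianReal_eq_integral_smul hv]
  simp_rw [smul_eq_mul, mul_left_comm (gaussianPDFReal μ v _), mul_comm (gaussianPDFReal μ v _)]
  rw [← intervalIntegral.integral_Iic_add_Ioi hint.integrableOn hint.integrableOn, hIic, hIoi,
    integral_neg, integral_Iic_sub_mul_gaussianPDFReal, integral_Ioi_sub_mul_gaussianPDFReal]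
  ring

/-- The left side is `(φ_v ⋆ φ_w)(0) = φ_{v+w}(0)`. -/
lemma integral_gaussianPDFReal_mul_gaussianPDFReal {v w : ℝ≥0} (hv : v ≠ 0) (hw : w ≠ 0) :
    ∫ x, gaussianPDFReal 0 v x * gaussianPDFReal 0 w x = (√(2 * π * (v + w)))⁻¹ := by
  have hv' : (0 : ℝ) < v := NNReal.coe_pos.2 (pos_iff_ne_zero.2 hv)
  have hw' : (0 : ℝ) < w := NNReal.coe_pos.2 (pos_iff_ne_zero.2 hw)
  set b : ℝ := (v + w) / (2 * v * w)
  have hprod : ∀ x, gaussianPDFReal 0 v x * gaussianPDFReal 0 w x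
      = ((√(2 * π * v))⁻¹ * (√(2 * π * w))⁻¹) * rexp (-b * x ^ 2) := fun x => by
    simp only [gaussianPDFReal, sub_zero, b]
    rw [mul_mul_mul_comm, ← Real.exp_add]
    congr 2
    field_simp
    ring
  simp_rw [hprod, integral_const_mul, integral_gaussian]
  rw [← Real.sqrt_inv, ← Real.sqrt_inv, ← Real.sqrt_inv, ← Real.sqrt_mul (by positivity),
    ← Real.sqrt_mul (by positivity)]
  congr 1
  simp only [b]
  field_simp

end ProbabilityTheory

theorem stmt_1 {Ω : Type*} [MeasurableSpace Ω] (μ : Measure Ω) [IsProbabilityMeasure μ]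
    (g e : Ω → ℝ) (hgm : Measurable g) (hem : Measurable e)
    (σ : ℝ) (hσ : 0 < σ)
    (hg : Measure.map g μ = gaussianReal 0 1)
    (he : Measure.map e μ = gaussianReal 0 (⟨σ^2, sq_nonneg σ⟩ : NNReal))
    (hindep : IndepFun g e μ) :
    ∫ ω, sgn (g ω + e ω) * g ω ∂μ = Real.sqrt (2/(π*(1+σ^2))) := by
  set v : ℝ≥0 := ⟨σ ^ 2, sq_nonneg σ⟩
  have hv : v ≠ 0 := by
    rw [ne_eq, ← NNReal.coe_eq_zero]
    exact pow_ne_zero 2 hσ.ne'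
  have hF : Integrable (fun p : ℝ × ℝ => sgn (p.1 + p.2) * p.1)
      ((gaussianReal 0 1).prod (gaussianReal 0 v)) :=
    integrable_sgn_add_mul_fst ((memLp_id_gaussianReal' 1 ENNReal.one_ne_top).integrable le_rfl)
  have hjoint : μ.map (fun ω => (g ω, e ω)) = (gaussianReal 0 1).prod (gaussianReal 0 v) := by
    rw [hindep.map_prod_eq_prod_map_map hgm.aemeasurable hem.aemeasurable, hg, he]
  calc ∫ ω, sgn (g ω + e ω) * g ω ∂μ
      = ∫ p : ℝ × ℝ, sgn (p.1 + p.2) * p.1 ∂((gaussianReal 0 1).prod (gaussianReal 0 v)) := by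
        rw [← hjoint, integral_map (hgm.prodMk hem).aemeasurable (hjoint ▸ hF.1)]
    _ = ∫ y, ∫ x, sgn (x + y) * x ∂gaussianReal 0 1 ∂gaussianReal 0 v := integral_prod_symm _ hF
    _ = ∫ y, 2 * gaussianPDFReal 0 1 y ∂gaussianReal 0 v := by
        congr with y
        simpa [gaussianPDFReal] using integral_sgn_sub_mul_sub_gaussianReal 0 1 (-y)
    _ = 2 * ∫ y, gaussianPDFReal 0 v y * gaussianPDFReal 0 1 y := by
        rw [integral_gaussianReal_eq_integral_smul hv, ← integral_const_mul]
        simp_rw [smul_eq_mul, mul_left_comm]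
    _ = √(2 / (π * (1 + σ ^ 2))) := by
        rw [integral_gaussianPDFReal_mul_gaussianPDFReal hv one_ne_zero, NNReal.coe_one,
          show (v : ℝ) = σ ^ 2 from rfl, eq_comm,
          Real.sqrt_eq_iff_eq_sq (by positivity) (by positivity), mul_pow, inv_pow,
          Real.sq_sqrt (by positivity)]
        field_simp
        ring
end

section
/- Let s₀,…,s_{m-1} ∈ ℝⁿ be unit vectors with |⟨s_i, s_j⟩| ≤ ε for all i ≠ j, where m·ε < 1. Then for each i ∈ {1,…,m-1}, any unit vector t in the span of s₀,…,s_{i-1} satisfies ⟨s_i, t⟩² ≤ m·ε²/(1 - m·ε). -/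
/-!
Write `t = ∑ c j • s j` over `j < i`. Near-orthogonality and Cauchy–Schwarz give
`⟪s i, t⟫² ≤ ε² (∑ |c j|)² ≤ m ε² ∑ (c j)²`, while Gershgorin's bound on the Gram matrix of the
`s j` gives `(1 - m ε) ∑ (c j)² ≤ ‖t‖² = 1`.
-/

open Finset RealInnerProductSpace

section AlmostOrthogonal

variable {E ι : Type*} [NormedAddCommGroup E] [InnerProductSpace ℝ E]
  {v : ι → E} {T : Finset ι} {ε : ℝ}

lemma abs_inner_sum_smul_le {u : E} (c : ι → ℝ) (hu : ∀ j ∈ T, |⟪u, v j⟫| ≤ ε) :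
    |⟪u, ∑ j ∈ T, c j • v j⟫| ≤ ε * ∑ j ∈ T, |c j| := by
  rw [inner_sum, mul_sum]
  refine (abs_sum_le_sum_abs _ _).trans (sum_le_sum fun j hj => ?_)
  rw [real_inner_smul_right, abs_mul, mul_comm ε]
  exact mul_le_mul_of_nonneg_left (hu j hj) (abs_nonneg _)

lemma sq_sum_abs_le_card_mul_sum_sq (c : ι → ℝ) :
    (∑ j ∈ T, |c j|) ^ 2 ≤ #T * ∑ j ∈ T, c j ^ 2 := by
  simpa only [sq_abs] using sq_sum_le_card_mul_sum_sq (s := T) (f := fun j => |c j|)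

lemma norm_sum_smul_sq_eq (c : ι → ℝ) :
    ‖∑ j ∈ T, c j • v j‖ ^ 2 = ∑ j ∈ T, ∑ k ∈ T, c j * c k * ⟪v j, v k⟫ := by
  rw [← real_inner_self_eq_norm_sq, sum_inner]
  simp_rw [real_inner_smul_left, inner_sum, real_inner_smul_right, mul_sum, mul_assoc]

lemma one_sub_card_mul_mul_sum_sq_le_norm_sq (c : ι → ℝ) (hε : 0 ≤ ε)
    (hunit : ∀ j ∈ T, ‖v j‖ = 1) (hinner : ∀ j ∈ T, ∀ k ∈ T, j ≠ k → |⟪v j, v k⟫| ≤ ε) :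
    (1 - #T * ε) * ∑ j ∈ T, c j ^ 2 ≤ ‖∑ j ∈ T, c j • v j‖ ^ 2 := by
  classical
  have hentry : ∀ j ∈ T, ∀ k ∈ T,
      (if j = k then c j ^ 2 else 0) - ε * (|c j| * |c k|) ≤ c j * c k * ⟪v j, v k⟫ := by
    intro j hj k hk
    by_cases hjk : j = k
    · subst hjk
      rw [real_inner_self_eq_norm_sq, hunit j hj, if_pos rfl, ← abs_mul, ← sq, abs_sq]
      linarith [mul_nonneg hε (sq_nonneg (c j))]
    · rw [if_neg hjk, zero_sub, neg_le, ← abs_mul, mul_comm ε]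
      refine (neg_le_abs _).trans ?_
      rw [abs_mul]
      exact mul_le_mul_of_nonneg_left (hinner j hj k hk hjk) (abs_nonneg _)
  have hlower : ∑ j ∈ T, c j ^ 2 - ε * (∑ j ∈ T, |c j|) ^ 2 ≤ ‖∑ j ∈ T, c j • v j‖ ^ 2 := by
    rw [norm_sum_smul_sq_eq]
    calc _ = ∑ j ∈ T, ∑ k ∈ T, ((if j = k then c j ^ 2 else 0) - ε * (|c j| * |c k|)) := by
          rw [sq (∑ j ∈ T, _), sum_mul_sum, mul_sum]
          simp [sum_sub_distrib, mul_sum]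
      _ ≤ _ := sum_le_sum fun j hj => sum_le_sum fun k hk => hentry j hj k hk
  linarith [mul_le_mul_of_nonneg_left (sq_sum_abs_le_card_mul_sum_sq (T := T) c) hε]

lemma inner_sum_smul_sq_le {u : E} (c : ι → ℝ) {N : ℝ} (hε : 0 ≤ ε)
    (hunit : ∀ j ∈ T, ‖v j‖ = 1) (hinner : ∀ j ∈ T, ∀ k ∈ T, j ≠ k → |⟪v j, v k⟫| ≤ ε)
    (hu : ∀ j ∈ T, |⟪u, v j⟫| ≤ ε) (hT : #T ≤ N) (hNε : N * ε < 1)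
    (hx : ‖∑ j ∈ T, c j • v j‖ = 1) :
    ⟪u, ∑ j ∈ T, c j • v j⟫ ^ 2 ≤ N * ε ^ 2 / (1 - N * ε) := by
  set A := ∑ j ∈ T, c j ^ 2
  set B := ∑ j ∈ T, |c j|
  have hA : 0 ≤ A := sum_nonneg fun j _ => sq_nonneg (c j)
  have hBA : B ^ 2 ≤ N * A :=
    (sq_sum_abs_le_card_mul_sum_sq c).trans (mul_le_mul_of_nonneg_right hT hA)
  have hA_le : (1 - N * ε) * A ≤ 1 := by
    have := one_sub_card_mul_mul_sum_sq_le_norm_sq c hε hunit hinner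
    rw [hx, one_pow] at this
    linarith [mul_le_mul_of_nonneg_right (mul_le_mul_of_nonneg_right hT hε) hA]
  have hinner_sq : ⟪u, ∑ j ∈ T, c j • v j⟫ ^ 2 ≤ ε ^ 2 * B ^ 2 := by
    rw [← sq_abs, ← mul_pow]
    exact pow_le_pow_left₀ (abs_nonneg _) (abs_inner_sum_smul_le c hu) 2
  have hbound : ⟪u, ∑ j ∈ T, c j • v j⟫ ^ 2 ≤ ε ^ 2 * (N * A) := hinner_sq.trans (by gcongr)
  rw [le_div_iff₀ (by linarith)]
  calc ⟪u, ∑ j ∈ T, c j • v j⟫ ^ 2 * (1 - N * ε)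
      ≤ ε ^ 2 * (N * A) * (1 - N * ε) := mul_le_mul_of_nonneg_right hbound (by linarith)
    _ = N * ε ^ 2 * ((1 - N * ε) * A) := by ring
    _ ≤ N * ε ^ 2 := mul_le_of_le_one_right
      (mul_nonneg ((Nat.cast_nonneg _).trans hT) (sq_nonneg ε)) hA_le

end AlmostOrthogonal

theorem stmt_12 {m n : ℕ} (s : Fin m → EuclideanSpace ℝ (Fin n)) (ε : ℝ) (hε : 0 ≤ ε)
    (hunit : ∀ i, ‖s i‖ = 1)
    (hortho : ∀ i j, i ≠ j → |(inner ℝ (s i) (s j) : ℝ)| ≤ ε)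
    (hmε : m * ε < 1) :
    ∀ i : Fin m, ∀ t ∈ Submodule.span ℝ (s '' {j | j < i}), ‖t‖ = 1 →
      (inner ℝ (s i) t : ℝ)^2 ≤ m * ε^2 / (1 - m * ε) := by
  intro i t ht ht_norm
  rw [show {j | j < i} = ↑(Iio i) from (coe_Iio i).symm,
    Submodule.mem_span_image_finset_iff_exists_fun'] at ht
  obtain ⟨c, rfl⟩ := ht
  refine inner_sum_smul_sq_le c hε (fun j _ => hunit j) (fun j _ k _ => hortho j k)
    (fun j hj => hortho i j (mem_Iio.mp hj).ne') ?_ hmε ht_norm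
  exact_mod_cast (card_le_univ _).trans (Fintype.card_fin m).le
end

section
/- Let s₀,…,s_{m-1} ∈ ℝⁿ be unit vectors such that m·ε < 1/2 and, for all i ≠ j, |⟨s_i, s_j⟩| ≤ ε. Then there exist vectors u₀,…,u_{m-1} and r₀,…,r_{m-1} in ℝⁿ with s_i = u_i + r_i for all i, such that: (1) u_i is orthogonal to the span of {u_j : j ≠ i}, and (2) ‖r_i‖₂² ≤ 2m·ε² for all i. -/
/-!
Take `u` to be the Gram–Schmidt orthogonalisation of `s` and `r i = s i - u i`, the orthogonal
projection of `s i` onto `span {s j | j < i}`. Then `‖r i‖² = ⟪s i, r i⟫`. Writing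
`r i = ∑ c j • s j`, near-orthogonality gives `|⟪s i, r i⟫| ≤ ε ∑ |c j|`, Cauchy–Schwarz gives
`(∑ |c j|)² ≤ m ∑ c j²`, and a Gershgorin bound gives `(1 - m ε) ∑ c j² ≤ ‖r i‖²`. Hence
`‖r i‖⁴ (1 - m ε) ≤ m ε² ‖r i‖²`, i.e. `‖r i‖² ≤ m ε² / (1 - m ε) ≤ 2 m ε²`.
-/

open Finset Submodule InnerProductSpace

section GramSchmidt

variable {𝕜 E ι : Type*} [RCLike 𝕜] [NormedAddCommGroup E] [InnerProductSpace 𝕜 E]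
  [LinearOrder ι] [LocallyFiniteOrderBot ι] [WellFoundedLT ι]

theorem sub_gramSchmidt_mem_span_Iio (f : ι → E) (n : ι) :
    f n - gramSchmidt 𝕜 f n ∈ span 𝕜 (f '' Set.Iio n) := by
  rw [gramSchmidt_def 𝕜 f n, sub_sub_cancel, ← span_gramSchmidt_Iio 𝕜 f n]
  refine sum_mem fun i hi => ?_
  rw [starProjection_singleton]
  exact smul_mem _ _ (subset_span ⟨i, Finset.mem_Iio.1 hi, rfl⟩)

theorem inner_gramSchmidt_eq_zero_of_mem_span_Iio (f : ι → E) {n : ι} {v : E}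
    (hv : v ∈ span 𝕜 (f '' Set.Iio n)) : inner 𝕜 (gramSchmidt 𝕜 f n) v = 0 := by
  rw [← mem_orthogonal_singleton_iff_inner_right]
  refine span_le.2 ?_ hv
  rintro _ ⟨i, hi, rfl⟩
  exact mem_orthogonal_singleton_iff_inner_right.2 (gramSchmidt_inv_triangular 𝕜 f hi)

theorem inner_gramSchmidt_eq_zero_of_mem_span_ne (f : ι → E) {i : ι} {v : E}
    (hv : v ∈ span 𝕜 (gramSchmidt 𝕜 f '' {j | j ≠ i})) :
    inner 𝕜 (gramSchmidt 𝕜 f i) v = 0 := by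
  rw [← mem_orthogonal_singleton_iff_inner_right]
  refine span_le.2 ?_ hv
  rintro _ ⟨j, hj, rfl⟩
  exact mem_orthogonal_singleton_iff_inner_right.2 (gramSchmidt_orthogonal 𝕜 f (Ne.symm hj))

end GramSchmidt

theorem Submodule.exists_fun_of_mem_span_image {R M ι : Type*} [Semiring R] [AddCommMonoid M]
    [Module R M] [Fintype ι] {v : ι → M} {S : Set ι} {x : M} (hx : x ∈ span R (v '' S)) :
    ∃ c : ι → R, (∀ j ∉ S, c j = 0) ∧ ∑ j, c j • v j = x := by
  obtain ⟨l, hl, rfl⟩ := Finsupp.mem_span_image_iff_linearCombination R |>.1 hx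
  refine ⟨l, fun j hj => (Finsupp.mem_supported' R l).1 hl j hj, ?_⟩
  rw [Finsupp.linearCombination_apply]
  exact (Finsupp.sum_fintype l (fun _ a => a • v _) fun _ => zero_smul R _).symm

section AlmostOrthogonal

variable {ι E : Type*} [Fintype ι] [NormedAddCommGroup E] [InnerProductSpace ℝ E]
  {s : ι → E} {ε : ℝ}

theorem abs_inner_sum_smul_le_s13 (hortho : ∀ i j, i ≠ j → |(inner ℝ (s i) (s j) : ℝ)| ≤ ε)
    {c : ι → ℝ} {i : ι} (hci : c i = 0) :
    |(inner ℝ (s i) (∑ j, c j • s j) : ℝ)| ≤ ε * ∑ j, |c j| := by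
  rw [inner_sum, mul_sum]
  refine (abs_sum_le_sum_abs _ _).trans (sum_le_sum fun j _ => ?_)
  rw [real_inner_smul_right, abs_mul, mul_comm]
  rcases eq_or_ne i j with rfl | hij
  · simp [hci]
  · exact mul_le_mul_of_nonneg_right (hortho i j hij) (abs_nonneg _)

theorem sum_sq_mul_le_norm_sum_smul_sq (hε : 0 ≤ ε) (hunit : ∀ i, ‖s i‖ = 1)
    (hortho : ∀ i j, i ≠ j → |(inner ℝ (s i) (s j) : ℝ)| ≤ ε) (c : ι → ℝ) :
    (1 - (Fintype.card ι - 1) * ε) * ∑ j, c j ^ 2 ≤ ‖∑ j, c j • s j‖ ^ 2 := by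
  classical
  have hgram : ‖∑ j, c j • s j‖ ^ 2 =
      ∑ j, c j ^ 2 + ∑ j, ∑ k ∈ univ.erase j, c j * c k * inner ℝ (s j) (s k) := by
    rw [← real_inner_self_eq_norm_sq, sum_inner, ← sum_add_distrib]
    refine sum_congr rfl fun j _ => ?_
    rw [inner_sum, ← add_sum_erase _ _ (mem_univ j), real_inner_smul_left, real_inner_smul_right,
      real_inner_self_eq_norm_sq, hunit]
    simp only [real_inner_smul_left, real_inner_smul_right]
    ring_nf
  have hoff : ∑ j, ∑ k ∈ univ.erase j, |c j| * |c k| = (∑ j, |c j|) ^ 2 - ∑ j, c j ^ 2 := by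
    rw [sq, sum_mul_sum, ← sum_sub_distrib]
    refine sum_congr rfl fun j _ => ?_
    rw [← add_sum_erase _ _ (mem_univ j), abs_mul_abs_self]
    ring
  have hcs : (∑ j, |c j|) ^ 2 ≤ Fintype.card ι * ∑ j, c j ^ 2 := by
    simpa [sq_abs] using sq_sum_le_card_mul_sum_sq (s := univ) (f := fun j => |c j|)
  have hbound : |∑ j, ∑ k ∈ univ.erase j, c j * c k * inner ℝ (s j) (s k)| ≤
      ε * ∑ j, ∑ k ∈ univ.erase j, |c j| * |c k| := calc
    _ ≤ ∑ j, ∑ k ∈ univ.erase j, |c j * c k * inner ℝ (s j) (s k)| :=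
      (abs_sum_le_sum_abs _ _).trans (sum_le_sum fun j _ => abs_sum_le_sum_abs _ _)
    _ ≤ ∑ j, ∑ k ∈ univ.erase j, ε * (|c j| * |c k|) := by
      refine sum_le_sum fun j _ => sum_le_sum fun k hk => ?_
      rw [abs_mul, abs_mul, mul_comm ε]
      exact mul_le_mul_of_nonneg_left (hortho j k (ne_of_mem_erase hk).symm) (by positivity)
    _ = ε * ∑ j, ∑ k ∈ univ.erase j, |c j| * |c k| := by simp only [mul_sum]
  rw [hoff] at hbound
  rw [hgram]
  linarith [(abs_le.1 hbound).1, mul_le_mul_of_nonneg_left hcs hε]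

theorem inner_sq_mul_le_of_mem_span (hε : 0 ≤ ε) (hunit : ∀ i, ‖s i‖ = 1)
    (hortho : ∀ i j, i ≠ j → |(inner ℝ (s i) (s j) : ℝ)| ≤ ε) (hcard : Fintype.card ι * ε ≤ 1)
    {i : ι} {t : E} (ht : t ∈ span ℝ (s '' {j | j ≠ i})) :
    (inner ℝ (s i) t : ℝ) ^ 2 * (1 - Fintype.card ι * ε) ≤ Fintype.card ι * ε ^ 2 * ‖t‖ ^ 2 := by
  obtain ⟨c, hc, rfl⟩ := exists_fun_of_mem_span_image ht
  have hupper : (inner ℝ (s i) (∑ j, c j • s j) : ℝ) ^ 2 ≤ ε ^ 2 * (∑ j, |c j|) ^ 2 := by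
    rw [← mul_pow, ← sq_abs]
    exact pow_le_pow_left₀ (abs_nonneg _) (abs_inner_sum_smul_le_s13 hortho (hc i (by simp))) 2
  have hcs : (∑ j, |c j|) ^ 2 ≤ Fintype.card ι * ∑ j, c j ^ 2 := by
    simpa [sq_abs] using sq_sum_le_card_mul_sum_sq (s := univ) (f := fun j => |c j|)
  have hlower := sum_sq_mul_le_norm_sum_smul_sq hε hunit hortho c
  have hQ : (1 - Fintype.card ι * ε) * ∑ j, c j ^ 2 ≤ ‖∑ j, c j • s j‖ ^ 2 :=
    le_trans (by gcongr; linarith) hlower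
  calc _ ≤ ε ^ 2 * (Fintype.card ι * ∑ j, c j ^ 2) * (1 - Fintype.card ι * ε) := by
        gcongr
        exact hupper.trans (by gcongr)
    _ = Fintype.card ι * ε ^ 2 * ((1 - Fintype.card ι * ε) * ∑ j, c j ^ 2) := by ring
    _ ≤ _ := by gcongr

end AlmostOrthogonal

theorem stmt_13 {m n : ℕ} (s : Fin m → EuclideanSpace ℝ (Fin n)) (ε : ℝ) (hε : 0 ≤ ε)
    (hunit : ∀ i, ‖s i‖ = 1)
    (hortho : ∀ i j, i ≠ j → |(inner ℝ (s i) (s j) : ℝ)| ≤ ε)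
    (hmε : m * ε < 1/2) :
    ∃ u r : Fin m → EuclideanSpace ℝ (Fin n),
      (∀ i, s i = u i + r i) ∧
      (∀ i, ∀ v ∈ Submodule.span ℝ (u '' {j | j ≠ i}), (inner ℝ (u i) v : ℝ) = 0) ∧
      (∀ i, ‖r i‖^2 ≤ 2 * m * ε^2) := by
  refine ⟨gramSchmidt ℝ s, fun i => s i - gramSchmidt ℝ s i, fun i => (add_sub_cancel _ _).symm,
    fun i _ hv => inner_gramSchmidt_eq_zero_of_mem_span_ne s hv, fun i => ?_⟩
  have hr : s i - gramSchmidt ℝ s i ∈ span ℝ (s '' Set.Iio i) := sub_gramSchmidt_mem_span_Iio s i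
  have hnorm : ‖s i - gramSchmidt ℝ s i‖ ^ 2 = inner ℝ (s i) (s i - gramSchmidt ℝ s i) := by
    rw [← real_inner_self_eq_norm_sq, inner_sub_left,
      inner_gramSchmidt_eq_zero_of_mem_span_Iio s hr, sub_zero]
  have key := inner_sq_mul_le_of_mem_span hε hunit hortho (by rw [Fintype.card_fin]; linarith)
    (span_mono (Set.image_mono fun j hj => ne_of_lt hj) hr)
  rw [Fintype.card_fin, ← hnorm] at key
  show ‖s i - gramSchmidt ℝ s i‖ ^ 2 ≤ _
  set A := ‖s i - gramSchmidt ℝ s i‖ ^ 2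
  by_contra! hlt
  have hA : 0 < A := lt_of_le_of_lt (by positivity) hlt
  nlinarith [mul_nonneg (sq_nonneg A) (by linarith : (0 : ℝ) ≤ 1 / 2 - m * ε),
    mul_pos hA (by linarith : 0 < A - 2 * m * ε ^ 2)]
end
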